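/- arXiv:math/9911218 — 7 statements merged into one kernel-verified Lean document; each statement's English description precedes it below -/
import Mathlib

section
/- Let n ≥ 1 and let T, ι, Σ₀,…,Σ_{n−1}, ψ₀,…,ψ_{n−1}, ψ be as in the context. Then the kernel of the ℤ-linear map ℤ^{n+2} → ℤ^T sending (a₀,…,a_{n−1},b,c) to a₀ψ₀+⋯+a_{n−1}ψ_{n−1}+bψ+c·(ψ∘ι) is the free ℤ-module of rank one generated by (1,1,…,1,−1,−(n−1)). Equivalently, the identity ψ₀+⋯+ψ_{n−1}+(n−2)ψ = (n−1)(ψ+ψ∘ι) holds, and every ℤ-linear relation among ψ₀,…,ψ_{n−1},ψ,ψ∘ι is an integer multiple of this one. -/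
/-!
A point `x` lies either in exactly one `Σᵢ` or has `ι x` in exactly one `Σᵢ`. In the first case
`ψⱼ x = δᵢⱼ`, `ψ x = 1`, `ψ (ι x) = 0`, so a relation `∑ aⱼψⱼ + bψ + c(ψ∘ι)` evaluates to
`aᵢ + b`; in the second `ψⱼ x = 1 - δᵢⱼ`, `ψ x = 0`, `ψ (ι x) = 1`, and it evaluates to
`∑ aⱼ - aᵢ + c`. Since every `Σᵢ` is nonempty, both kinds of points occur for every `i`, and the
relation vanishes iff all these linear forms vanish, i.e. iff `aᵢ = -b` for all `i` and
`c = -(n - 1)(-b)`. The identity is the relation with `aᵢ = 1`, `b = -1`, `c = -(n - 1)`.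
-/

open Finset

theorem Finset.mem_image_iff_of_involutive {α : Type*} [DecidableEq α] {f : α → α}
    (hf : f.Involutive) {s : Finset α} {x : α} : x ∈ s.image f ↔ f x ∈ s := by
  simpa using Set.mem_image_iff_of_inverse (s := (s : Set α)) (b := x) hf.leftInverse
    hf.rightInverse

theorem Int.exists_eq_of_forall_add_eq_zero_and_sum_sub_add_eq_zero {n : ℕ} (hn : 1 ≤ n)
    (a : Fin n → ℤ) (b c : ℤ) :
    ((∀ i, a i + b = 0) ∧ ∀ i, ∑ j, a j - a i + c = 0) ↔
      ∃ k : ℤ, (∀ i, a i = k) ∧ b = -k ∧ c = -((n : ℤ) - 1) * k := by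
  constructor
  · rintro ⟨hA, hB⟩
    have ha : ∀ i, a i = -b := fun i => by linarith [hA i]
    have hsum : ∑ j, a j = n * -b := by simp [ha]
    refine ⟨-b, ha, by ring, ?_⟩
    linear_combination hB ⟨0, hn⟩ - hsum + ha ⟨0, hn⟩
  · rintro ⟨k, ha, rfl, rfl⟩
    have hsum : ∑ j, a j = n * k := by simp [ha]
    exact ⟨fun i => by rw [ha]; ring, fun i => by rw [hsum, ha]; ring⟩

section Indicators

variable {T : Type*} [DecidableEq T] {n : ℕ} (ι : T → T) (S : Fin n → Finset T)

def psiI (i : Fin n) (x : T) : ℤ := if x ∈ S i ∨ ∃ j, j ≠ i ∧ ι x ∈ S j then 1 else 0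

def psi (x : T) : ℤ := if ∃ i, x ∈ S i then 1 else 0

def DisjointWithImages : Prop :=
  ∀ p q : Fin n ⊕ Fin n, p ≠ q →
    Disjoint (Sum.elim S (fun i => (S i).image ι) p) (Sum.elim S (fun i => (S i).image ι) q)

variable {ι S} {i : Fin n} {x : T}

theorem psi_of_mem (hx : x ∈ S i) : psi S x = 1 := if_pos ⟨i, hx⟩

theorem DisjointWithImages.eq_of_mem_of_mem (hdisj : DisjointWithImages ι S) {j : Fin n}
    (hi : x ∈ S i) (hj : x ∈ S j) : i = j := by
  by_contra h
  exact disjoint_left.mp (hdisj (.inl i) (.inl j) (by simpa using h)) hi hj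

theorem DisjointWithImages.notMem_of_apply_mem (hdisj : DisjointWithImages ι S)
    (hι : ι.Involutive) {j : Fin n} (hi : ι x ∈ S i) : x ∉ S j :=
  fun hj => disjoint_left.mp (hdisj (.inl j) (.inr i) (by simp)) hj
    ((mem_image_iff_of_involutive hι).mpr hi)

theorem DisjointWithImages.psiI_of_mem (hdisj : DisjointWithImages ι S) (hι : ι.Involutive)
    (hx : x ∈ S i) (j : Fin n) : psiI ι S j x = if j = i then 1 else 0 := by
  have hιx : ∀ k, ι x ∉ S k := fun k hk =>
    hdisj.notMem_of_apply_mem hι (x := ι x) (by rwa [hι x]) hk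
  by_cases hji : j = i
  · simp [psiI, hji, hx]
  · rw [if_neg hji]
    refine if_neg ?_
    rintro (hj | ⟨k, -, hk⟩)
    · exact hji (hdisj.eq_of_mem_of_mem hj hx)
    · exact hιx k hk

theorem DisjointWithImages.psiI_of_apply_mem (hdisj : DisjointWithImages ι S)
    (hι : ι.Involutive) (hx : ι x ∈ S i) (j : Fin n) :
    psiI ι S j x = if j = i then 0 else 1 := by
  by_cases hji : j = i
  · rw [if_pos hji]
    refine if_neg ?_
    rintro (hj | ⟨k, hki, hk⟩)
    · exact hdisj.notMem_of_apply_mem hι hx hj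
    · exact hki (hdisj.eq_of_mem_of_mem hk (hji ▸ hx))
  · rw [if_neg hji]
    exact if_pos (.inr ⟨i, Ne.symm hji, hx⟩)

theorem DisjointWithImages.psi_of_apply_mem (hdisj : DisjointWithImages ι S)
    (hι : ι.Involutive) (hx : ι x ∈ S i) : psi S x = 0 :=
  if_neg fun ⟨_, hj⟩ => hdisj.notMem_of_apply_mem hι hx hj

variable (a : Fin n → ℤ) (b c : ℤ)

theorem DisjointWithImages.relation_of_mem (hdisj : DisjointWithImages ι S)
    (hι : ι.Involutive) (hx : x ∈ S i) :
    ∑ j, a j * psiI ι S j x + b * psi S x + c * psi S (ι x) = a i + b := by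
  rw [psi_of_mem hx, hdisj.psi_of_apply_mem hι (x := ι x) (by rwa [hι x])]
  simp [hdisj.psiI_of_mem hι hx]

theorem DisjointWithImages.relation_of_apply_mem (hdisj : DisjointWithImages ι S)
    (hι : ι.Involutive) (hx : ι x ∈ S i) :
    ∑ j, a j * psiI ι S j x + b * psi S x + c * psi S (ι x) = ∑ j, a j - a i + c := by
  rw [psi_of_mem hx, hdisj.psi_of_apply_mem hι hx]
  simp [hdisj.psiI_of_apply_mem hι hx, mul_ite, ← sum_erase_eq_sub (mem_univ i), ← filter_ne',
    sum_filter, ite_not]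
  
theorem DisjointWithImages.relation_eq_zero_iff (hdisj : DisjointWithImages ι S)
    (hι : ι.Involutive) (hne : ∀ i, (S i).Nonempty)
    (hcover : ∀ x : T, (∃ i, x ∈ S i) ∨ ∃ i, x ∈ (S i).image ι) :
    (∀ x, ∑ j, a j * psiI ι S j x + b * psi S x + c * psi S (ι x) = 0) ↔
      (∀ i, a i + b = 0) ∧ ∀ i, ∑ j, a j - a i + c = 0 := by
  constructor
  · intro h
    refine ⟨fun i => ?_, fun i => ?_⟩ <;> obtain ⟨y, hy⟩ := hne i
    · rw [← hdisj.relation_of_mem a b c hι hy]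
      exact h y
    · rw [← hdisj.relation_of_apply_mem a b c hι (x := ι y) (by rwa [hι y])]
      exact h (ι y)
  · rintro ⟨hA, hB⟩ x
    rcases hcover x with ⟨i, hx⟩ | ⟨i, hx⟩
    · rw [hdisj.relation_of_mem a b c hι hx, hA]
    · rw [hdisj.relation_of_apply_mem a b c hι ((mem_image_iff_of_involutive hι).mp hx), hB]

end Indicators

theorem stmt0_general {T : Type*} [DecidableEq T] (n : ℕ) (hn : 1 ≤ n)
    (ι : T → T) (hι : Function.Involutive ι)
    (S : Fin n → Finset T)
    (hne : ∀ i, (S i).Nonempty)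
    (hdisj : ∀ p q : Fin n ⊕ Fin n, p ≠ q →
      Disjoint (Sum.elim S (fun i => (S i).image ι) p)
        (Sum.elim S (fun i => (S i).image ι) q))
    (hcover : ∀ x : T, (∃ i, x ∈ S i) ∨ (∃ i, x ∈ (S i).image ι))
    (ψi : Fin n → T → ℤ)
    (hψi : ∀ i x, ψi i x = if x ∈ S i ∨ ∃ j, j ≠ i ∧ ι x ∈ S j then 1 else 0)
    (ψ : T → ℤ)
    (hψ : ∀ x, ψ x = if ∃ i, x ∈ S i then 1 else 0) :
    (∀ x, (∑ i, ψi i x) + ((n : ℤ) - 2) * ψ x = ((n : ℤ) - 1) * (ψ x + ψ (ι x))) ∧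
    (∀ (a : Fin n → ℤ) (b c : ℤ),
      (∀ x, (∑ i, a i * ψi i x) + b * ψ x + c * ψ (ι x) = 0) ↔
        ∃ k : ℤ, (∀ i, a i = k) ∧ b = -k ∧ c = -((n : ℤ) - 1) * k) := by
  obtain rfl : ψi = psiI ι S := funext fun i => funext (hψi i)
  obtain rfl : ψ = psi S := funext hψ
  have hker a b c := (DisjointWithImages.relation_eq_zero_iff a b c hdisj hι hne hcover).trans
    (Int.exists_eq_of_forall_add_eq_zero_and_sum_sub_add_eq_zero hn a b c)
  refine ⟨fun x => ?_, hker⟩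
  have hrel := (hker 1 (-1) (-((n : ℤ) - 1))).2 ⟨1, fun _ => rfl, rfl, by ring⟩ x
  simp only [Pi.one_apply, one_mul] at hrel
  linear_combination hrel

/-- Let `T` be a finite set with an involution `ι`, and let
`Σ₀, …, Σ_{n-1}` be nonempty subsets such that the `2n` sets
`Σ₀, …, Σ_{n-1}, ι(Σ₀), …, ι(Σ_{n-1})` are pairwise disjoint and cover `T`.
Let `ψᵢ` be the indicator function of `Σᵢ ∪ ⋃_{j ≠ i} ι(Σⱼ)` and `ψ` the indicator
function of `⋃ᵢ Σᵢ`.  Then the identity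
`ψ₀ + ⋯ + ψ_{n-1} + (n-2)ψ = (n-1)(ψ + ψ∘ι)` holds, and the kernel of the
map `ℤ^{n+2} → ℤ^T`, `(a, b, c) ↦ ∑ aᵢψᵢ + bψ + c (ψ∘ι)`, consists exactly of the
integer multiples of `(1, …, 1, -1, -(n-1))`. -/
theorem stmt0 {T : Type*} [Fintype T] [DecidableEq T] (n : ℕ) (hn : 1 ≤ n)
    (ι : T → T) (hι : Function.Involutive ι)
    (S : Fin n → Finset T)
    (hne : ∀ i, (S i).Nonempty)
    (hdisj : ∀ p q : Fin n ⊕ Fin n, p ≠ q →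
      Disjoint (Sum.elim S (fun i => (S i).image ι) p)
        (Sum.elim S (fun i => (S i).image ι) q))
    (hcover : ∀ x : T, (∃ i, x ∈ S i) ∨ (∃ i, x ∈ (S i).image ι))
    (ψi : Fin n → T → ℤ)
    (hψi : ∀ i x, ψi i x = if x ∈ S i ∨ ∃ j, j ≠ i ∧ ι x ∈ S j then 1 else 0)
    (ψ : T → ℤ)
    (hψ : ∀ x, ψ x = if ∃ i, x ∈ S i then 1 else 0) :
    (∀ x, (∑ i, ψi i x) + ((n : ℤ) - 2) * ψ x = ((n : ℤ) - 1) * (ψ x + ψ (ι x))) ∧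
    (∀ (a : Fin n → ℤ) (b c : ℤ),
      (∀ x, (∑ i, a i * ψi i x) + b * ψ x + c * ψ (ι x) = 0) ↔
        ∃ k : ℤ, (∀ i, a i = k) ∧ b = -k ∧ c = -((n : ℤ) - 1) * k) :=
  stmt0_general n hn ι hι S hne hdisj hcover ψi hψi ψ hψ
end

section
/- Let m, k, c ≥ 1 be integers and set n = m·k and n₀ = c·k. Let X, ι, X₀,…,X_{m−1}, f₀,…,f_{m−1}, f be as in the context. Then the kernel of the ℤ-linear map ℤ^{m+2} → ℤ^X sending (a₀,…,a_{m−1},b,d) to a₀f₀+⋯+a_{m−1}f_{m−1}+bf+d·(f∘ι) is the free ℤ-module of rank one generated by (k,k,…,k,−1,−(n−1)). Equivalently, the identity k(f₀+⋯+f_{m−1})+(n−2)f = (n−1)(f+f∘ι) holds, and every ℤ-linear relation among f₀,…,f_{m−1},f,f∘ι is an integer multiple of this one. -/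
/-!
At a point of `Xⱼ` only `fⱼ` and `f` are nonzero, with values `c` and `n₀`; at a point of
`ι(Xⱼ)` every `fᵢ` equals `n₀` except `fⱼ = n₀ - c`, and only `f ∘ ι` among the other two is
nonzero. So a relation `∑ aᵢfᵢ + bf + d(f ∘ ι) = 0` amounts to the two equations
`c aⱼ + n₀ b = 0` and `n₀ ∑ aᵢ - c aⱼ + n₀ d = 0` for every `j`, and with `n₀ = ck` these
force `aⱼ = -kb` and `d = (mk - 1)b`.
-/

open Finset Function

namespace InvolutionSplitting

variable {X R : Type*} [DecidableEq X] [CommRing R] {m : ℕ} {ι : X → X}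
  {Xs : Fin m → Finset X}

def DisjointWithImages (ι : X → X) (Xs : Fin m → Finset X) : Prop :=
  Pairwise (Disjoint on Sum.elim Xs fun j => (Xs j).image ι)

def blockFun (ι : X → X) (Xs : Fin m → Finset X) (c n₀ : R) (j : Fin m) (x : X) : R :=
  if x ∈ Xs j then c
  else if ι x ∈ Xs j then n₀ - c
  else if ∃ j', x ∈ Xs j' then 0
  else n₀

def unionFun (Xs : Fin m → Finset X) (n₀ : R) (x : X) : R :=
  if ∃ j, x ∈ Xs j then n₀ else 0

def linComb (ι : X → X) (Xs : Fin m → Finset X) (c n₀ : R) (a : Fin m → R) (b d : R)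
    (x : X) : R :=
  ∑ j, a j * blockFun ι Xs c n₀ j x + b * unionFun Xs n₀ x + d * unionFun Xs n₀ (ι x)

theorem eq_of_mem_of_mem (hdisj : DisjointWithImages ι Xs)
    {x : X} {j j' : Fin m} (hj : x ∈ Xs j) (hj' : x ∈ Xs j') : j = j' := by
  by_contra h
  exact disjoint_left.1 (hdisj (Sum.inl_injective.ne h)) hj hj'

theorem apply_notMem_of_mem (hdisj : DisjointWithImages ι Xs)
    {x : X} {j j' : Fin m} (hx : x ∈ Xs j) : ι x ∉ Xs j' :=
  disjoint_left.1 (hdisj Sum.inr_ne_inl) (mem_image_of_mem ι hx)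

theorem blockFun_of_mem (hdisj : DisjointWithImages ι Xs) {x : X} {j₀ : Fin m}
    (hx : x ∈ Xs j₀) (c n₀ : R) (j : Fin m) :
    blockFun ι Xs c n₀ j x = if j = j₀ then c else 0 := by
  by_cases h : j = j₀
  · subst h
    simp [blockFun, hx]
  · rw [blockFun, if_neg (mt (eq_of_mem_of_mem hdisj · hx) h),
      if_neg (apply_notMem_of_mem hdisj hx), if_pos ⟨j₀, hx⟩, if_neg h]

theorem blockFun_apply_of_mem (hι : Involutive ι) (hdisj : DisjointWithImages ι Xs)
    {y : X} {j₀ : Fin m} (hy : y ∈ Xs j₀) (c n₀ : R) (j : Fin m) :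
    blockFun ι Xs c n₀ j (ι y) = if j = j₀ then n₀ - c else n₀ := by
  have hyι : ∀ j', ι y ∉ Xs j' := fun _ => apply_notMem_of_mem hdisj hy
  by_cases h : j = j₀
  · subst h
    simp [blockFun, hι y, hy, hyι]
  · simp [blockFun, hι y, hyι, h, mt (eq_of_mem_of_mem hdisj · hy) h]

theorem unionFun_of_mem {x : X} {j : Fin m} (hx : x ∈ Xs j) (n₀ : R) :
    unionFun Xs n₀ x = n₀ :=
  if_pos ⟨j, hx⟩

theorem unionFun_apply_of_mem (hdisj : DisjointWithImages ι Xs) {x : X} {j : Fin m}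
    (hx : x ∈ Xs j) (n₀ : R) :
    unionFun Xs n₀ (ι x) = 0 :=
  if_neg fun ⟨_, h⟩ => apply_notMem_of_mem hdisj hx h

theorem linComb_of_mem (hdisj : DisjointWithImages ι Xs) {y : X} {j₀ : Fin m}
    (hy : y ∈ Xs j₀) (c n₀ : R) (a : Fin m → R) (b d : R) :
    linComb ι Xs c n₀ a b d y = a j₀ * c + b * n₀ := by
  simp [linComb, blockFun_of_mem hdisj hy, unionFun_of_mem hy, unionFun_apply_of_mem hdisj hy]

theorem linComb_apply_of_mem (hι : Involutive ι) (hdisj : DisjointWithImages ι Xs)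
    {y : X} {j₀ : Fin m} (hy : y ∈ Xs j₀) (c n₀ : R) (a : Fin m → R) (b d : R) :
    linComb ι Xs c n₀ a b d (ι y) = n₀ * ∑ j, a j - a j₀ * c + d * n₀ := by
  have hterm : ∀ j, a j * blockFun ι Xs c n₀ j (ι y) =
      a j * n₀ - if j = j₀ then a j * c else 0 := by
    intro j
    rw [blockFun_apply_of_mem hι hdisj hy]
    split_ifs <;> ring
  simp only [linComb, hterm, sum_sub_distrib, sum_ite_eq', mem_univ, if_true, ← sum_mul,
    unionFun_of_mem hy, unionFun_apply_of_mem hdisj hy, hι y]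
  ring

theorem forall_linComb_eq_zero_iff (hι : Involutive ι) (hdisj : DisjointWithImages ι Xs)
    (hne : ∀ j, (Xs j).Nonempty) (hcover : ∀ x, (∃ j, x ∈ Xs j) ∨ ∃ j, x ∈ (Xs j).image ι)
    (c n₀ : R) (a : Fin m → R) (b d : R) :
    (∀ x, linComb ι Xs c n₀ a b d x = 0) ↔
      ∀ j, a j * c + b * n₀ = 0 ∧ n₀ * ∑ i, a i - a j * c + d * n₀ = 0 := by
  constructor
  · intro h j
    obtain ⟨y, hy⟩ := hne j
    exact ⟨linComb_of_mem hdisj hy c n₀ a b d ▸ h y,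
      linComb_apply_of_mem hι hdisj hy c n₀ a b d ▸ h (ι y)⟩
  · intro h x
    rcases hcover x with ⟨j, hx⟩ | ⟨j, hx⟩
    · exact linComb_of_mem hdisj hx c n₀ a b d ▸ (h j).1
    · obtain ⟨y, hy, rfl⟩ := mem_image.1 hx
      exact linComb_apply_of_mem hι hdisj hy c n₀ a b d ▸ (h j).2

theorem linComb_equations_iff [IsDomain R] (hm : 0 < m) {k c : R} (hk : k ≠ 0) (hc : c ≠ 0)
    (a : Fin m → R) (b d : R) :
    (∀ j, a j * c + b * (c * k) = 0 ∧ c * k * ∑ i, a i - a j * c + d * (c * k) = 0) ↔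
      ∃ t, (∀ j, a j = k * t) ∧ b = -t ∧ d = -(m * k - 1) * t := by
  constructor
  · intro h
    have ha : ∀ j, a j = k * -b := fun j =>
      mul_right_cancel₀ hc (by linear_combination (h j).1)
    obtain ⟨-, h₂⟩ := h ⟨0, hm⟩
    simp only [ha, sum_const, card_univ, Fintype.card_fin, nsmul_eq_mul] at h₂
    refine ⟨-b, ha, (neg_neg b).symm, mul_left_cancel₀ (mul_ne_zero hc hk) ?_⟩
    linear_combination h₂
  · rintro ⟨t, ha, rfl, rfl⟩ j
    simp only [ha, sum_const, card_univ, Fintype.card_fin, nsmul_eq_mul]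
    constructor <;> ring

end InvolutionSplitting

open InvolutionSplitting

theorem stmt2_general {X : Type*} [DecidableEq X] (m k c : ℕ)
    (hm : 1 ≤ m) (hk : 1 ≤ k) (hc : 1 ≤ c)
    (ι : X → X) (hι : Function.Involutive ι)
    (Xs : Fin m → Finset X)
    (hne : ∀ j, (Xs j).Nonempty)
    (hdisj : ∀ s t : Fin m ⊕ Fin m, s ≠ t →
      Disjoint (Sum.elim Xs (fun j => (Xs j).image ι) s)
        (Sum.elim Xs (fun j => (Xs j).image ι) t))
    (hcover : ∀ x : X, (∃ j, x ∈ Xs j) ∨ (∃ j, x ∈ (Xs j).image ι))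
    (fj : Fin m → X → ℤ)
    (hfj : ∀ j x, fj j x =
      if x ∈ Xs j then (c : ℤ)
      else if ι x ∈ Xs j then (c : ℤ) * k - c
      else if ∃ j', x ∈ Xs j' then 0
      else (c : ℤ) * k)
    (f : X → ℤ)
    (hf : ∀ x, f x = if ∃ j, x ∈ Xs j then (c : ℤ) * k else 0) :
    (∀ x, (k : ℤ) * (∑ j, fj j x) + ((m : ℤ) * k - 2) * f x
        = ((m : ℤ) * k - 1) * (f x + f (ι x))) ∧
    (∀ (a : Fin m → ℤ) (b d : ℤ),
      (∀ x, (∑ j, a j * fj j x) + b * f x + d * f (ι x) = 0) ↔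
        ∃ t : ℤ, (∀ j, a j = (k : ℤ) * t) ∧ b = -t ∧ d = -((m : ℤ) * k - 1) * t) := by
  obtain rfl : fj = blockFun ι Xs (c : ℤ) (c * k) := funext fun j => funext (hfj j)
  obtain rfl : f = unionFun Xs ((c : ℤ) * k) := funext hf
  have hkernel (a : Fin m → ℤ) (b d : ℤ) :=
    (forall_linComb_eq_zero_iff hι hdisj hne hcover _ _ a b d).trans
      (linComb_equations_iff hm (k := (k : ℤ)) (c := (c : ℤ)) (by omega) (by omega) a b d)
  refine ⟨fun x => ?_, hkernel⟩
  have hrel := (hkernel (fun _ => (k : ℤ)) (-1) (-((m : ℤ) * k - 1))).2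
    ⟨1, fun _ => (mul_one _).symm, rfl, (mul_one _).symm⟩ x
  rw [linComb, ← mul_sum] at hrel
  linear_combination hrel

/-- Let `m, k, c ≥ 1`, and set `n = m·k`, `n₀ = c·k`.  Let `X` be a
finite set with an involution `ι`, and `X₀, …, X_{m-1}` nonempty subsets such that the
`2m` sets `X₀, …, X_{m-1}, ι(X₀), …, ι(X_{m-1})` are pairwise disjoint and cover `X`.
Let `fⱼ ∈ ℤ^X` take the value `c` on `Xⱼ`, `0` on the other `Xⱼ′`, `n₀ - c` on `ι(Xⱼ)`
and `n₀` on the other `ι(Xⱼ′)`, and let `f` take the value `n₀` on `⋃ⱼ Xⱼ` and `0`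
elsewhere.  Then `k(f₀ + ⋯ + f_{m-1}) + (n-2)f = (n-1)(f + f∘ι)`, and the kernel of
`ℤ^{m+2} → ℤ^X`, `(a, b, d) ↦ ∑ aⱼfⱼ + bf + d (f∘ι)`, consists exactly of the integer
multiples of `(k, …, k, -1, -(n-1))`. -/
theorem stmt2 {X : Type*} [Fintype X] [DecidableEq X] (m k c : ℕ)
    (hm : 1 ≤ m) (hk : 1 ≤ k) (hc : 1 ≤ c)
    (ι : X → X) (hι : Function.Involutive ι)
    (Xs : Fin m → Finset X)
    (hne : ∀ j, (Xs j).Nonempty)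
    (hdisj : ∀ s t : Fin m ⊕ Fin m, s ≠ t →
      Disjoint (Sum.elim Xs (fun j => (Xs j).image ι) s)
        (Sum.elim Xs (fun j => (Xs j).image ι) t))
    (hcover : ∀ x : X, (∃ j, x ∈ Xs j) ∨ (∃ j, x ∈ (Xs j).image ι))
    (fj : Fin m → X → ℤ)
    (hfj : ∀ j x, fj j x =
      if x ∈ Xs j then (c : ℤ)
      else if ι x ∈ Xs j then (c : ℤ) * k - c
      else if ∃ j', x ∈ Xs j' then 0
      else (c : ℤ) * k)
    (f : X → ℤ)
    (hf : ∀ x, f x = if ∃ j, x ∈ Xs j then (c : ℤ) * k else 0) :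
    (∀ x, (k : ℤ) * (∑ j, fj j x) + ((m : ℤ) * k - 2) * f x
        = ((m : ℤ) * k - 1) * (f x + f (ι x))) ∧
    (∀ (a : Fin m → ℤ) (b d : ℤ),
      (∀ x, (∑ j, a j * fj j x) + b * f x + d * f (ι x) = 0) ↔
        ∃ t : ℤ, (∀ j, a j = (k : ℤ) * t) ∧ b = -t ∧ d = -((m : ℤ) * k - 1) * t) :=
  stmt2_general m k c hm hk hc ι hι Xs hne hdisj hcover fj hfj f hf
end

section
/- Let K be a number field, p a prime number, q = p^a with a ≥ 1, and let π ∈ K^× be a Weil q-number of weight m. Then for every nonzero prime ideal v of O_K not lying above p, one has ord_v(π) = 0. -/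
open IsDedekindDomain

/-- The order (normalized additive valuation) `ord_v(x)` of `x ∈ K` at a nonzero prime
ideal `v` of the ring of integers of `K`: the exponent of `v` in the factorization of
the fractional ideal `x·O_K` (junk value `0` when `x = 0`). -/
noncomputable def ordv {K : Type*} [Field K] [NumberField K]
    (v : HeightOneSpectrum (NumberField.RingOfIntegers K)) (x : K) : ℤ :=
  if hx : v.valuation K x = 0 then 0 else -(WithZero.unzero hx).toAdd

open NumberField

/-! Under any embedding `σ`, `σ(q^N q^m π⁻¹) = conj(σ(q^N π))`, so both `q^N π` and
`q^N q^m π⁻¹` are algebraic integers. At a prime `v ∤ p` the power of `q` is a `v`-unit, hence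
`ord_v(π) ≥ 0` and `ord_v(π⁻¹) ≥ 0`. -/

theorem isIntegral_mul_inv_of_mul_conj_eq {K : Type*} [Field K] (σ : K →+* ℂ)
    {q π : K} {m : ℤ} {N : ℕ} (hπ0 : π ≠ 0) (hq : starRingEnd ℂ (σ q) = σ q)
    (hw : σ π * starRingEnd ℂ (σ π) = σ q ^ m) (hint : IsIntegral ℤ (q ^ N * π)) :
    IsIntegral ℤ (q ^ N * q ^ m * π⁻¹) := by
  have hσπ : σ π ≠ 0 := (map_ne_zero σ).2 hπ0
  have hconj : σ (q ^ N * q ^ m * π⁻¹) = starRingEnd ℂ (σ (q ^ N * π)) := by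
    simp only [map_mul, map_pow, map_zpow₀, map_inv₀, hq, ← hw]
    field_simp
  rw [← isIntegral_algHom_iff σ.toIntAlgHom σ.injective]
  change IsIntegral ℤ (σ _)
  rw [hconj]
  exact (hint.map σ.toIntAlgHom).map (starRingEnd ℂ).toIntAlgHom

namespace IsDedekindDomain.HeightOneSpectrum

theorem valuation_natCast_eq_one {R K : Type*} [CommRing R] [IsDedekindDomain R] [Field K]
    [Algebra R K] [IsFractionRing R K] (v : HeightOneSpectrum R) {n : ℕ}
    (hn : (n : R) ∉ v.asIdeal) : v.valuation K n = 1 := by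
  simpa using (v.valuation_eq_one_iff_notMem (K := K)).2 hn

variable {K : Type*} [Field K] [NumberField K] (v : HeightOneSpectrum (𝓞 K))

theorem valuation_le_one_of_isIntegral {x : K} (hx : IsIntegral ℤ x) : v.valuation K x ≤ 1 :=
  v.valuation_le_one (⟨x, hx⟩ : 𝓞 K)

theorem valuation_le_one_of_isIntegral_mul {u x : K} (hu : v.valuation K u = 1)
    (hx : IsIntegral ℤ (u * x)) : v.valuation K x ≤ 1 := by
  simpa [hu] using v.valuation_le_one_of_isIntegral hx

end IsDedekindDomain.HeightOneSpectrum

theorem ordv_eq_zero_of_valuation_eq_one {K : Type*} [Field K] [NumberField K]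
    {v : HeightOneSpectrum (𝓞 K)} {x : K} (h : v.valuation K x = 1) : ordv v x = 0 := by
  simp [ordv, h]
  rfl

theorem stmt5_general {K : Type*} [Field K] [NumberField K]
    (p : ℕ) (a : ℕ) (m : ℤ)
    (π : K) (hπ0 : π ≠ 0)
    (hint : ∃ N : ℕ, IsIntegral ℤ (((p : K) ^ a) ^ N * π))
    (hw : ∀ σ : K →+* ℂ, σ π * (starRingEnd ℂ) (σ π) = ((p : ℂ) ^ a) ^ m) :
    ∀ v : HeightOneSpectrum (NumberField.RingOfIntegers K),
      (p : NumberField.RingOfIntegers K) ∉ v.asIdeal → ordv v π = 0 := by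
  intro v hv
  obtain ⟨N, hN⟩ := hint
  obtain ⟨σ⟩ : Nonempty (K →+* ℂ) := inferInstance
  have hq : v.valuation K ((p : K) ^ a) = 1 := by
    rw [map_pow, v.valuation_natCast_eq_one hv, one_pow]
  have hπ_le : v.valuation K π ≤ 1 :=
    v.valuation_le_one_of_isIntegral_mul (by simp [hq]) hN
  have hπinv_le : v.valuation K π⁻¹ ≤ 1 :=
    v.valuation_le_one_of_isIntegral_mul (by simp [hq])
      (isIntegral_mul_inv_of_mul_conj_eq σ hπ0 (by simp) (by simpa using hw σ) hN)
  have hπv0 : v.valuation K π ≠ 0 := (map_ne_zero _).2 hπ0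
  rw [map_inv₀, inv_le_one₀ (zero_lt_iff.2 hπv0)] at hπinv_le
  exact ordv_eq_zero_of_valuation_eq_one (le_antisymm hπ_le hπinv_le)

/-- Let `K` be a number field, `p` a prime, `q = p^a` with `a ≥ 1`, and
`π ∈ K^×` a Weil `q`-number of weight `m` (i.e. `q^N·π` is an algebraic integer for some
`N`, and `σ(π)·conj(σ(π)) = q^m` for every embedding `σ : K → ℂ`).  Then `ord_v(π) = 0`
for every nonzero prime ideal `v` of `O_K` not lying above `p`. -/
theorem stmt5 {K : Type*} [Field K] [NumberField K]
    (p : ℕ) (hp : p.Prime) (a : ℕ) (ha : 1 ≤ a) (m : ℤ)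
    (π : K) (hπ0 : π ≠ 0)
    (hint : ∃ N : ℕ, IsIntegral ℤ (((p : K) ^ a) ^ N * π))
    (hw : ∀ σ : K →+* ℂ, σ π * (starRingEnd ℂ) (σ π) = ((p : ℂ) ^ a) ^ m) :
    ∀ v : HeightOneSpectrum (NumberField.RingOfIntegers K),
      (p : NumberField.RingOfIntegers K) ∉ v.asIdeal → ordv v π = 0 :=
  stmt5_general p a m π hπ0 hint hw
end

section
/- Let K be a number field, p a prime number, q = p^a with a ≥ 1, and let π, π′ ∈ K^× be Weil q-numbers of the same weight m. If ord_v(π) = ord_v(π′) for every nonzero prime ideal v of O_K lying above p, then π/π′ is a root of unity. (A Weil q-number is determined up to a root of unity by its slope function.) -/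
open IsDedekindDomain

/-!
At a prime `v` above `p` the hypothesis on the orders gives `v(π / π') = 1`. At a prime `v`
not above `p`, a Weil `q`-number `x` is a `v`-unit: `y = q^N x` is an algebraic integer whose
norm squared is a power of `q`, because `|σ x|² = q^m` for every embedding `σ`. So the norm of
`y` lies outside `v`, hence so does `y`, as `v` contains the norm of each of its elements.
Therefore `π / π'` is an algebraic integer all of whose conjugates have absolute value `1`, and
Kronecker's theorem makes it a root of unity.
-/

open NumberField WithZero

theorem Ideal.intCast_norm_mem {S : Type*} [CommRing S] [IsDedekindDomain S]
    [Module.Free ℤ S] [Module.Finite ℤ S] {I : Ideal S} {y : S} (hy : y ∈ I) :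
    (Algebra.norm ℤ y : S) ∈ I := by
  obtain ⟨c, hc⟩ := Ideal.absNorm_dvd_norm_of_mem hy
  rw [hc, Int.cast_mul, Int.cast_natCast]
  exact I.mul_mem_right _ (Ideal.absNorm_mem I)

theorem IsDedekindDomain.HeightOneSpectrum.valuation_natCast_eq_one_s6 {R : Type*} [CommRing R]
    [IsDedekindDomain R] {K : Type*} [Field K] [Algebra R K] [IsFractionRing R K]
    (v : HeightOneSpectrum R) {n : ℕ} (hn : (n : R) ∉ v.asIdeal) :
    v.valuation K (n : K) = 1 := by
  simpa using (v.valuation_eq_one_iff_notMem (K := K)).2 hn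

theorem valuation_eq_of_ordv_eq {K : Type*} [Field K] [NumberField K]
    {v : HeightOneSpectrum (𝓞 K)} {x y : K} (hx : x ≠ 0) (hy : y ≠ 0)
    (h : ordv v x = ordv v y) : v.valuation K x = v.valuation K y := by
  have hx' : v.valuation K x ≠ 0 := (Valuation.ne_zero_iff _).mpr hx
  have hy' : v.valuation K y ≠ 0 := (Valuation.ne_zero_iff _).mpr hy
  rw [ordv, ordv, dif_neg hx', dif_neg hy', neg_inj, toAdd_unzero_eq_log,
    toAdd_unzero_eq_log] at h
  rw [← exp_log hx', h, exp_log hy']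

theorem Algebra.norm_sq_eq_of_forall_mul_conj_eq {K : Type*} [Field K] [NumberField K] {x : K}
    {c : ℚ} (h : ∀ σ : K →+* ℂ, σ x * starRingEnd ℂ (σ x) = c) :
    Algebra.norm ℚ x ^ 2 = c ^ Module.finrank ℚ K := by
  apply (algebraMap ℚ ℂ).injective
  have hreal : starRingEnd ℂ (algebraMap ℚ ℂ (Algebra.norm ℚ x)) =
      algebraMap ℚ ℂ (Algebra.norm ℚ x) := by
    rw [eq_ratCast, map_ratCast]
  calc algebraMap ℚ ℂ (Algebra.norm ℚ x ^ 2)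
      = algebraMap ℚ ℂ (Algebra.norm ℚ x) *
          starRingEnd ℂ (algebraMap ℚ ℂ (Algebra.norm ℚ x)) := by
        rw [hreal, map_pow, sq]
    _ = ∏ σ : K →ₐ[ℚ] ℂ, σ x * starRingEnd ℂ (σ x) := by
        rw [Algebra.norm_eq_prod_embeddings, map_prod, Finset.prod_mul_distrib]
    _ = algebraMap ℚ ℂ (c ^ Module.finrank ℚ K) := by
        rw [Finset.prod_congr rfl fun σ _ => h σ.toRingHom, Finset.prod_const, Finset.card_univ,
          AlgHom.card, map_pow, eq_ratCast]

def IsWeilNumber {K : Type*} [Field K] (q : ℕ) (m : ℤ) (x : K) : Prop :=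
  (∃ N : ℕ, IsIntegral ℤ ((q : K) ^ N * x)) ∧
    ∀ σ : K →+* ℂ, σ x * starRingEnd ℂ (σ x) = (q : ℂ) ^ m

namespace IsWeilNumber

variable {K : Type*} [Field K] {q : ℕ} {m : ℤ} {x : K}

theorem norm_embedding_eq_norm {y : K} (hx : IsWeilNumber q m x) (hy : IsWeilNumber q m y)
    (σ : K →+* ℂ) : ‖σ x‖ = ‖σ y‖ := by
  have h : (Complex.normSq (σ x) : ℂ) = Complex.normSq (σ y) := by
    rw [← Complex.mul_conj, ← Complex.mul_conj, hx.2, hy.2]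
  rw [Complex.norm_def, Complex.norm_def, Complex.ofReal_inj.mp h]

variable [NumberField K]

theorem valuation_norm_eq_one (hx : IsWeilNumber q m x) {v : HeightOneSpectrum (𝓞 K)}
    (hv : (q : 𝓞 K) ∉ v.asIdeal) :
    v.valuation K (algebraMap ℚ K (Algebra.norm ℚ x)) = 1 := by
  have hsq := Algebra.norm_sq_eq_of_forall_mul_conj_eq (c := (q : ℚ) ^ m) (by simpa using hx.2)
  apply sq_eq_one.mp
  rw [← map_pow, ← map_pow, hsq, map_pow, map_pow, map_zpow₀, map_natCast, map_zpow₀,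
    v.valuation_natCast_eq_one_s6 hv, one_zpow, one_pow]

theorem valuation_eq_one (hx : IsWeilNumber q m x) {v : HeightOneSpectrum (𝓞 K)}
    (hv : (q : 𝓞 K) ∉ v.asIdeal) : v.valuation K x = 1 := by
  have hq := v.valuation_natCast_eq_one_s6 (K := K) hv
  obtain ⟨N, hN⟩ := hx.1
  obtain ⟨y, hy⟩ := (IsIntegralClosure.isIntegral_iff (A := 𝓞 K)).mp hN
  have hxy : v.valuation K x = v.valuation K (algebraMap (𝓞 K) K y) := by
    rw [hy, map_mul, map_pow, hq, one_pow, one_mul]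
  rw [hxy, v.valuation_eq_one_iff_notMem]
  intro hyv
  have hnorm : algebraMap (𝓞 K) K (Algebra.norm ℤ y) =
      (q : K) ^ (N * Module.finrank ℚ K) * algebraMap ℚ K (Algebra.norm ℚ x) := by
    rw [map_intCast, ← Rat.cast_intCast, ← eq_ratCast (algebraMap ℚ K), Algebra.coe_norm_int,
      RingOfIntegers.coe_eq_algebraMap, hy, ← map_natCast (algebraMap ℚ K), ← map_pow,
      map_mul, Algebra.norm_algebraMap, map_mul, map_pow, map_pow, map_natCast, pow_mul]
  have hlt : v.valuation K (algebraMap (𝓞 K) K (Algebra.norm ℤ y)) < 1 :=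
    (v.valuation_lt_one_iff_mem _).2 (Ideal.intCast_norm_mem hyv)
  rw [hnorm, map_mul, map_pow, hq, one_pow, one_mul, hx.valuation_norm_eq_one hv] at hlt
  exact lt_irrefl _ hlt

end IsWeilNumber

theorem stmt6_general {K : Type*} [Field K] [NumberField K]
    (p : ℕ) (a : ℕ) (m : ℤ)
    (π π' : K) (hπ0 : π ≠ 0) (hπ'0 : π' ≠ 0)
    (hint : ∃ N : ℕ, IsIntegral ℤ (((p : K) ^ a) ^ N * π))
    (hint' : ∃ N : ℕ, IsIntegral ℤ (((p : K) ^ a) ^ N * π'))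
    (hw : ∀ σ : K →+* ℂ, σ π * (starRingEnd ℂ) (σ π) = ((p : ℂ) ^ a) ^ m)
    (hw' : ∀ σ : K →+* ℂ, σ π' * (starRingEnd ℂ) (σ π') = ((p : ℂ) ^ a) ^ m)
    (hord : ∀ v : HeightOneSpectrum (NumberField.RingOfIntegers K),
      (p : NumberField.RingOfIntegers K) ∈ v.asIdeal → ordv v π = ordv v π') :
    ∃ n : ℕ, 0 < n ∧ (π / π') ^ n = 1 := by
  have hπ : IsWeilNumber (p ^ a) m π := ⟨by simpa using hint, by simpa using hw⟩
  have hπ' : IsWeilNumber (p ^ a) m π' := ⟨by simpa using hint', by simpa using hw'⟩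
  have hle : ∀ v : HeightOneSpectrum (𝓞 K), v.valuation K (π / π') ≤ 1 := by
    intro v
    by_cases hpv : (p : 𝓞 K) ∈ v.asIdeal
    · rw [map_div₀, valuation_eq_of_ordv_eq hπ0 hπ'0 (hord v hpv),
        div_self ((Valuation.ne_zero_iff _).mpr hπ'0)]
    · have hqv : ((p ^ a : ℕ) : 𝓞 K) ∉ v.asIdeal := by
        push_cast
        exact fun h => hpv (v.isPrime.mem_of_pow_mem _ h)
      rw [map_div₀, hπ.valuation_eq_one hqv, hπ'.valuation_eq_one hqv, div_one]
  obtain ⟨y, hy⟩ := HeightOneSpectrum.mem_integers_of_valuation_le_one K _ hle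
  obtain ⟨n, hn, hpow⟩ := Embeddings.pow_eq_one_of_norm_eq_one K ℂ
    (hy ▸ RingOfIntegers.isIntegral_coe y) fun φ => by
      rw [map_div₀, norm_div, hπ.norm_embedding_eq_norm hπ' φ,
        div_self (norm_ne_zero_iff.mpr ((map_ne_zero φ).mpr hπ'0))]
  exact ⟨n, hn, hpow⟩

/-- Let `K` be a number field, `p` a prime, `q = p^a` with `a ≥ 1`, and
`π, π′ ∈ K^×` Weil `q`-numbers of the same weight `m`.  If `ord_v(π) = ord_v(π′)` for
every prime ideal `v` of `O_K` lying above `p`, then `π/π′` is a root of unity: a Weil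
`q`-number is determined up to a root of unity by its slope function. -/
theorem stmt6 {K : Type*} [Field K] [NumberField K]
    (p : ℕ) (hp : p.Prime) (a : ℕ) (ha : 1 ≤ a) (m : ℤ)
    (π π' : K) (hπ0 : π ≠ 0) (hπ'0 : π' ≠ 0)
    (hint : ∃ N : ℕ, IsIntegral ℤ (((p : K) ^ a) ^ N * π))
    (hint' : ∃ N : ℕ, IsIntegral ℤ (((p : K) ^ a) ^ N * π'))
    (hw : ∀ σ : K →+* ℂ, σ π * (starRingEnd ℂ) (σ π) = ((p : ℂ) ^ a) ^ m)
    (hw' : ∀ σ : K →+* ℂ, σ π' * (starRingEnd ℂ) (σ π') = ((p : ℂ) ^ a) ^ m)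
    (hord : ∀ v : HeightOneSpectrum (NumberField.RingOfIntegers K),
      (p : NumberField.RingOfIntegers K) ∈ v.asIdeal → ordv v π = ordv v π') :
    ∃ n : ℕ, 0 < n ∧ (π / π') ^ n = 1 :=
  stmt6_general p a m π π' hπ0 hπ'0 hint hint' hw hw' hord
end

section
/- Let K be a number field, p a prime number, q = p^a with a ≥ 1, and let π ∈ K^× be a Weil q-number of weight m. If ord_v(π) = 0 for every nonzero prime ideal v of O_K lying above p, then m = 0 and π is a root of unity. (A Weil germ is 1 if and only if its slopes are all zero.) -/
/-!
Write `q = p^a`. Away from `p` the power `q` is a unit, so the valuations of `π` there are controlled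
by the integrality of `q^N π`, and above `p` they vanish by hypothesis; hence `π` is integral. Its
"complex conjugate" `π' = q^m / π` lies in `K` and is integral, because some embedding maps it to the
conjugate of an algebraic integer. The same two arguments applied to `π⁻¹ = q^{-m} π'` and `π'⁻¹`
show that `π` and `π'` are units, so `q^m = π π'` and `q^{-m}` are both rational integers and `m = 0`.
Then every conjugate of `π` has absolute value `1`, and Kronecker's theorem makes `π` a root of unity.
-/

open IsDedekindDomain

open NumberField

namespace IsDedekindDomain.HeightOneSpectrum

variable {R : Type*} [CommRing R] [IsDedekindDomain R] {K : Type*} [Field K] [Algebra R K]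
  [IsFractionRing R K]

theorem valuation_le_one_of_zpow_mul {r : R} {k : ℤ} {x : K}
    (hk : ∀ v : HeightOneSpectrum R, v.valuation K (algebraMap R K r ^ k * x) ≤ 1)
    (hr : ∀ v : HeightOneSpectrum R, r ∈ v.asIdeal → v.valuation K x ≤ 1)
    (v : HeightOneSpectrum R) : v.valuation K x ≤ 1 := by
  by_cases hv : r ∈ v.asIdeal
  · exact hr v hv
  · have hr1 : v.valuation K (algebraMap R K r) = 1 := (valuation_eq_one_iff_notMem v).mpr hv
    simpa only [map_mul, map_zpow₀, hr1, one_zpow, one_mul] using hk v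

end IsDedekindDomain.HeightOneSpectrum

namespace NumberField

variable {K : Type*} [Field K] [NumberField K]

theorem isIntegral_iff_forall_valuation_le_one {x : K} :
    IsIntegral ℤ x ↔ ∀ v : HeightOneSpectrum (𝓞 K), v.valuation K x ≤ 1 := by
  constructor
  · intro hx v
    exact v.valuation_le_one ⟨x, hx⟩
  · intro hx
    obtain ⟨r, rfl⟩ := HeightOneSpectrum.mem_integers_of_valuation_le_one K x hx
    exact RingOfIntegers.isIntegral_coe r

theorem isIntegral_of_isIntegral_zpow_mul {r : 𝓞 K} {k : ℤ} {x : K}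
    (hk : IsIntegral ℤ ((r : K) ^ k * x))
    (hr : ∀ v : HeightOneSpectrum (𝓞 K), r ∈ v.asIdeal → v.valuation K x ≤ 1) :
    IsIntegral ℤ x :=
  isIntegral_iff_forall_valuation_le_one.mpr <|
    HeightOneSpectrum.valuation_le_one_of_zpow_mul
      (isIntegral_iff_forall_valuation_le_one.mp hk) hr

theorem valuation_eq_one_of_ordv_eq_zero {v : HeightOneSpectrum (𝓞 K)} {x : K} (hx : x ≠ 0)
    (h : ordv v x = 0) : v.valuation K x = 1 := by
  have hv0 : v.valuation K x ≠ 0 := (Valuation.ne_zero_iff _).mpr hx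
  rw [ordv, dif_neg hv0, neg_eq_zero, toAdd_eq_zero] at h
  rw [← WithZero.coe_unzero hv0, h, WithZero.coe_one]

end NumberField

theorem isIntegral_of_map_eq_conj {K : Type*} [Field K] (σ : K →+* ℂ) {x y : K}
    (h : σ y = starRingEnd ℂ (σ x)) (hx : IsIntegral ℤ x) : IsIntegral ℤ y := by
  have hσy : IsIntegral ℤ (σ y) := h ▸ hx.map ((starRingEnd ℂ).comp σ).toIntAlgHom
  exact (isIntegral_algHom_iff σ.toIntAlgHom σ.injective).mp hσy

theorem nonneg_of_isIntegral_natCast_zpow {K : Type*} [Field K] [CharZero K] {q : ℕ} (hq : 1 < q)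
    {m : ℤ} (h : IsIntegral ℤ ((q : K) ^ m)) : 0 ≤ m := by
  have hℚ : IsIntegral ℤ ((q : ℚ) ^ m) := by
    refine (isIntegral_algebraMap_iff (algebraMap ℚ K).injective).mp ?_
    simpa only [map_zpow₀, map_natCast] using h
  obtain ⟨z, hz⟩ := IsIntegrallyClosed.isIntegral_iff.mp hℚ
  by_contra! hm
  have hpos : (0 : ℚ) < q ^ m := zpow_pos (by positivity) m
  have hlt : (q : ℚ) ^ m < 1 := zpow_lt_one_of_neg₀ (by exact_mod_cast hq) hm
  rw [← hz, algebraMap_int_eq, eq_intCast] at hpos hlt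
  have : (0 : ℤ) < z ∧ z < 1 := ⟨by exact_mod_cast hpos, by exact_mod_cast hlt⟩
  omega

theorem eq_zero_of_isIntegral_natCast_zpow_of_inv {K : Type*} [Field K] [CharZero K] {q : ℕ}
    (hq : 1 < q) {m : ℤ} (h : IsIntegral ℤ ((q : K) ^ m)) (h' : IsIntegral ℤ ((q : K) ^ m)⁻¹) :
    m = 0 :=
  le_antisymm (neg_nonneg.mp (nonneg_of_isIntegral_natCast_zpow (K := K) hq (by rwa [zpow_neg])))
    (nonneg_of_isIntegral_natCast_zpow hq h)

theorem Complex.norm_eq_one_of_mul_conj_eq_one {z : ℂ} (h : z * starRingEnd ℂ z = 1) : ‖z‖ = 1 := by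
  rw [Complex.mul_conj', ← Complex.ofReal_pow, Complex.ofReal_eq_one] at h
  exact (pow_eq_one_iff_of_nonneg (norm_nonneg z) two_ne_zero).mp h

/-- Let `K` be a number field, `p` a prime, `q = p^a` with `a ≥ 1`, and
`π ∈ K^×` a Weil `q`-number of weight `m`.  If `ord_v(π) = 0` for every prime ideal `v`
of `O_K` lying above `p`, then `m = 0` and `π` is a root of unity: a Weil germ is `1`
if and only if all its slopes are zero. -/
theorem stmt7 {K : Type*} [Field K] [NumberField K]
    (p : ℕ) (hp : p.Prime) (a : ℕ) (ha : 1 ≤ a) (m : ℤ)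
    (π : K) (hπ0 : π ≠ 0)
    (hint : ∃ N : ℕ, IsIntegral ℤ (((p : K) ^ a) ^ N * π))
    (hw : ∀ σ : K →+* ℂ, σ π * (starRingEnd ℂ) (σ π) = ((p : ℂ) ^ a) ^ m)
    (hord : ∀ v : HeightOneSpectrum (NumberField.RingOfIntegers K),
      (p : NumberField.RingOfIntegers K) ∈ v.asIdeal → ordv v π = 0) :
    m = 0 ∧ ∃ n : ℕ, 0 < n ∧ π ^ n = 1 := by
  obtain ⟨N, hN⟩ := hint
  obtain ⟨σ⟩ : Nonempty (K →+* ℂ) := inferInstance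
  have hq : 1 < p ^ a := Nat.one_lt_pow (by omega) hp.one_lt
  have hpow (k : ℤ) : ((p : 𝓞 K) : K) ^ (a * k) = ((p ^ a : ℕ) : K) ^ k := by
    rw [zpow_mul, zpow_natCast]; push_cast; rfl
  have hπv (v : HeightOneSpectrum (𝓞 K)) (hv : (p : 𝓞 K) ∈ v.asIdeal) :
      v.valuation K π = 1 :=
    valuation_eq_one_of_ordv_eq_zero hπ0 (hord v hv)
  set π' : K := ((p ^ a : ℕ) : K) ^ m * π⁻¹
  have hσπ' : σ π' = starRingEnd ℂ (σ π) := by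
    have hσπ : σ π ≠ 0 := (map_ne_zero σ).mpr hπ0
    rw [map_mul, map_zpow₀, map_inv₀, map_natCast, Nat.cast_pow, ← hw σ]
    field_simp
  have hπ : IsIntegral ℤ π :=
    isIntegral_of_isIntegral_zpow_mul (k := a * N) (by rwa [hpow, zpow_natCast, Nat.cast_pow])
      fun v hv ↦ (hπv v hv).le
  have hπ'int : IsIntegral ℤ π' := isIntegral_of_map_eq_conj σ hσπ' hπ
  have hπinv : IsIntegral ℤ π⁻¹ :=
    isIntegral_of_isIntegral_zpow_mul (k := a * m) (by rwa [hpow])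
      fun v hv ↦ by rw [map_inv₀, hπv v hv, inv_one]
  have hπ'inv : IsIntegral ℤ π'⁻¹ :=
    isIntegral_of_map_eq_conj σ (by rw [map_inv₀, map_inv₀, hσπ', map_inv₀]) hπinv
  have hqm : ((p ^ a : ℕ) : K) ^ m = π * π' := by
    rw [mul_left_comm, mul_inv_cancel₀ hπ0, mul_one]
  have hm : m = 0 := eq_zero_of_isIntegral_natCast_zpow_of_inv hq (hqm ▸ hπ.mul hπ'int)
    (by rw [hqm, mul_inv]; exact hπinv.mul hπ'inv)
  refine ⟨hm, ?_⟩
  obtain ⟨n, hn, hπn⟩ := Embeddings.pow_eq_one_of_norm_eq_one K ℂ hπ fun φ ↦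
    Complex.norm_eq_one_of_mul_conj_eq_one (by rw [hw φ, hm, zpow_zero])
  exact ⟨n, hn, hπn⟩
end

section
/- Let K ⊆ ℂ be a number field that is Galois over ℚ and stable under complex conjugation, and suppose that the automorphism ι ∈ Gal(K/ℚ) obtained by restricting complex conjugation to K is central in Gal(K/ℚ). Let ψ : Gal(K/ℚ) → {0,1} be a function with ψ(g) + ψ(ι∘g) = 1 for all g ∈ Gal(K/ℚ) (a CM-type on K). Let α be an algebraic integer in K whose norm N = Nm_{K/ℚ}(α) is positive. Then the element β = ∏_{g ∈ Gal(K/ℚ)} g(α)^{ψ(g)} is an algebraic integer in K satisfying τ(β)·(the complex conjugate of τ(β)) = N for every field embedding τ : K → ℂ; that is, β is a Weil N-integer of weight 1. -/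
/-!
Write `β = ∏_g g(α)^{ψ(g)}`. Applying `ι` and reindexing by `g ↦ ι ∘ g` gives
`ι(β) = ∏_g g(α)^{ψ(ι⁻¹ ∘ g)}`, so the CM-type condition turns `β · ι(β)` into `∏_g g(α)`,
the norm of `α`. Since every embedding `τ` intertwines `ι` with complex conjugation,
`τ(β) · conj(τ(β)) = τ(β · ι(β)) = Nm(α)`.
-/

namespace AlgEquiv

variable {F K : Type*} [CommSemiring F] [CommSemiring K] [Algebra F K] [Fintype (K ≃ₐ[F] K)]

theorem apply_prod_pow_eq_prod_pow_trans_symm (ι : K ≃ₐ[F] K) (ψ : (K ≃ₐ[F] K) → ℕ) (α : K) :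
    ι (∏ g : K ≃ₐ[F] K, g α ^ ψ g) = ∏ g : K ≃ₐ[F] K, g α ^ ψ (g.trans ι.symm) := by
  rw [map_prod]
  refine Fintype.prod_equiv (Equiv.mulLeft ι) _ _ fun g => ?_
  have hg : (ι * g).trans ι.symm = g := by ext x; simp
  simp [hg]

theorem prod_pow_mul_apply_prod_pow {ι : K ≃ₐ[F] K} {ψ : (K ≃ₐ[F] K) → ℕ}
    (hψ : ∀ g : K ≃ₐ[F] K, ψ g + ψ (g.trans ι) = 1) (α : K) :
    (∏ g : K ≃ₐ[F] K, g α ^ ψ g) * ι (∏ g : K ≃ₐ[F] K, g α ^ ψ g) = ∏ g : K ≃ₐ[F] K, g α := by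
  rw [apply_prod_pow_eq_prod_pow_trans_symm, ← Finset.prod_mul_distrib]
  refine Finset.prod_congr rfl fun g _ => ?_
  have hg : ψ (g.trans ι.symm) + ψ g = 1 := by
    rw [← hψ (g.trans ι.symm)]
    congr 2
    ext x
    simp
  rw [← pow_add, add_comm, hg, pow_one]

end AlgEquiv

theorem stmt9_general {K : Type*} [Field K] [NumberField K] [IsGalois ℚ K]
    (ι : K ≃ₐ[ℚ] K)
    (hι : ∀ (σ : K →+* ℂ) (x : K), σ (ι x) = (starRingEnd ℂ) (σ x))
    (ψ : (K ≃ₐ[ℚ] K) → ℕ)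
    (hψ : ∀ g : K ≃ₐ[ℚ] K, ψ g + ψ (g.trans ι) = 1)
    (α : K) (hα : IsIntegral ℤ α) :
    IsIntegral ℤ (∏ g : K ≃ₐ[ℚ] K, g α ^ ψ g) ∧
    ∀ τ : K →+* ℂ,
      τ (∏ g : K ≃ₐ[ℚ] K, g α ^ ψ g) *
        (starRingEnd ℂ) (τ (∏ g : K ≃ₐ[ℚ] K, g α ^ ψ g)) = (Algebra.norm ℚ α : ℂ) := by
  refine ⟨IsIntegral.prod _ fun g _ => (hα.map (g.toAlgHom.restrictScalars ℤ)).pow _, fun τ => ?_⟩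
  rw [← hι, ← map_mul, AlgEquiv.prod_pow_mul_apply_prod_pow hψ,
    ← Algebra.norm_eq_prod_automorphisms]
  exact eq_ratCast (τ.comp (algebraMap ℚ K)) _

/-- Let `K` be a number field, Galois over `ℚ`, admitting an
automorphism `ι` (the restriction of complex conjugation, necessarily central in
`Gal(K/ℚ)`) such that `σ ∘ ι = conj ∘ σ` for every embedding `σ : K → ℂ`.  Let
`ψ : Gal(K/ℚ) → {0,1}` be a CM-type on `K`, i.e. `ψ(g) + ψ(ι∘g) = 1` for all `g`.
Let `α` be an algebraic integer in `K` with positive norm `N = Nm_{K/ℚ}(α)`.  Then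
`β = ∏_g g(α)^{ψ(g)}` is an algebraic integer in `K` with
`τ(β)·conj(τ(β)) = N` for every embedding `τ : K → ℂ`, i.e. `β` is a Weil `N`-integer
of weight `1`. -/
theorem stmt9 {K : Type*} [Field K] [NumberField K] [IsGalois ℚ K]
    (ι : K ≃ₐ[ℚ] K)
    (hι : ∀ (σ : K →+* ℂ) (x : K), σ (ι x) = (starRingEnd ℂ) (σ x))
    (ψ : (K ≃ₐ[ℚ] K) → ℕ)
    (hψ01 : ∀ g, ψ g = 0 ∨ ψ g = 1)
    (hψ : ∀ g : K ≃ₐ[ℚ] K, ψ g + ψ (g.trans ι) = 1)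
    (α : K) (hα : IsIntegral ℤ α)
    (hN : 0 < Algebra.norm ℚ α) :
    IsIntegral ℤ (∏ g : K ≃ₐ[ℚ] K, g α ^ ψ g) ∧
    ∀ τ : K →+* ℂ,
      τ (∏ g : K ≃ₐ[ℚ] K, g α ^ ψ g) *
        (starRingEnd ℂ) (τ (∏ g : K ≃ₐ[ℚ] K, g α ^ ψ g)) = (Algebra.norm ℚ α : ℂ) :=
  stmt9_general ι hι ψ hψ α hα
end

section
/- Let K ⊆ ℂ be a number field that is Galois over ℚ and stable under complex conjugation, such that the restriction ι of complex conjugation to K is central in Gal(K/ℚ). Let p be a prime number and let X be the set of prime ideals of O_K lying above p; assume ι(w) ≠ w for every w ∈ X. Since K/ℚ is Galois, all w ∈ X have the same ramification index e and residue degree f over p; set n₀ = e·f. Then for every m ∈ ℤ and every function φ : X → ℤ satisfying φ(w) + φ(ι(w)) = n₀·m for all w ∈ X, there exist an integer N ≥ 1 and an element π ∈ K^× such that σ(π)·(the complex conjugate of σ(π)) = p^{N·m} for every field embedding σ : K → ℂ, and n₀·ord_w(π) = N·e·φ(w) for every w ∈ X (that is, π is a Weil p^N-number of weight m whose slope function is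 φ(w)/n₀). -/
/-!
By the Chinese remainder theorem there is `α ∈ K^×` with `ord_w(α) = φ(w)` at every prime `w ∣ p`.
Then `π = α · p^(f m) / ι(α)` satisfies `π · ι(π) = p^(2 f m)`, so it is a Weil `p^(2f)`-number of
weight `m`; and since `ord_w(ι α) = φ(ι⁻¹ w)` and `φ(ι⁻¹ w) + φ(w) = e f m`, its order at `w` is
`2 φ(w)`.
-/

open IsDedekindDomain

open NumberField WithZero

namespace IsDedekindDomain.HeightOneSpectrum

variable {R : Type*} [CommRing R]

def mapEquiv (j : R ≃+* R) (w : HeightOneSpectrum R) : HeightOneSpectrum R where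
  asIdeal := w.asIdeal.map j
  isPrime := Ideal.map_isPrime_of_equiv j
  ne_bot h := w.ne_bot ((Ideal.map_eq_bot_iff_of_injective j.injective).mp h)

lemma mapEquiv_surjective (j : R ≃+* R) : Function.Surjective (mapEquiv j) :=
  fun w => ⟨w.mapEquiv j.symm, HeightOneSpectrum.ext (by
    simp only [mapEquiv, Ideal.map_symm]
    exact Ideal.map_comap_of_surjective j j.surjective w.asIdeal)⟩

lemma mem_mapEquiv_iff (j : R ≃+* R) (w : HeightOneSpectrum R) (x : R) :
    x ∈ (w.mapEquiv j).asIdeal ↔ ∃ y ∈ w.asIdeal, j y = x :=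
  Ideal.mem_map_of_equiv j x

lemma natCast_mem_mapEquiv_iff (j : R ≃+* R) (w : HeightOneSpectrum R) (n : ℕ) :
    (n : R) ∈ (w.mapEquiv j).asIdeal ↔ (n : R) ∈ w.asIdeal := by
  simpa only [mapEquiv, map_natCast] using
    Ideal.apply_mem_of_equiv_iff (f := j) (I := w.asIdeal) (x := n)

lemma finite_setOf_mem [IsDedekindDomain R] {r : R} (hr : r ≠ 0) :
    {v : HeightOneSpectrum R | r ∈ v.asIdeal}.Finite := by
  simpa only [Ideal.dvd_span_singleton] using
    Ideal.finite_factors (I := Ideal.span {r}) (by simpa using hr)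

end IsDedekindDomain.HeightOneSpectrum

section ordv

variable {K : Type*} [Field K] [NumberField K] (v : HeightOneSpectrum (𝓞 K))

lemma ordv_zero : ordv v (0 : K) = 0 := by
  simp [ordv]

lemma ordv_eq_neg_log (x : K) : ordv v x = -log (v.valuation K x) := by
  unfold ordv
  split_ifs with h
  · simp [h]
  · conv_rhs => rw [← coe_unzero h]
    rfl

lemma ordv_mul {x y : K} (hx : x ≠ 0) (hy : y ≠ 0) : ordv v (x * y) = ordv v x + ordv v y := by
  simp only [ordv_eq_neg_log, map_mul,
    log_mul ((v.valuation K).ne_zero_iff.mpr hx) ((v.valuation K).ne_zero_iff.mpr hy)]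
  ring

lemma ordv_div {x y : K} (hx : x ≠ 0) (hy : y ≠ 0) : ordv v (x / y) = ordv v x - ordv v y := by
  simp only [ordv_eq_neg_log, map_div₀,
    log_div ((v.valuation K).ne_zero_iff.mpr hx) ((v.valuation K).ne_zero_iff.mpr hy)]
  ring

lemma ordv_zpow (x : K) (k : ℤ) : ordv v (x ^ k) = k * ordv v x := by
  simp only [ordv_eq_neg_log, map_zpow₀, log_zpow, smul_eq_mul, mul_neg]

lemma natCast_le_ordv_coe_iff {r : 𝓞 K} (hr : r ≠ 0) (n : ℕ) :
    (n : ℤ) ≤ ordv v r ↔ r ∈ v.asIdeal ^ n := by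
  rw [ordv_eq_neg_log, le_neg, log_le_iff_le_exp, ← v.intValuation_le_pow_iff_mem,
    ← v.valuation_of_algebraMap (K := K)]
  simpa using hr

lemma ordv_coe_nonneg (r : 𝓞 K) : 0 ≤ ordv v r := by
  rcases eq_or_ne r 0 with rfl | hr
  · simp [ordv_zero]
  · exact_mod_cast (natCast_le_ordv_coe_iff v hr 0).mpr (by simp)

lemma ordv_coe_eq_of_mem_pow_of_notMem {r : 𝓞 K} {n : ℕ} (hn : r ∈ v.asIdeal ^ n)
    (hn1 : r ∉ v.asIdeal ^ (n + 1)) : ordv v r = n := by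
  have hr : r ≠ 0 := by rintro rfl; exact hn1 (zero_mem _)
  have h1 := (natCast_le_ordv_coe_iff v hr n).mpr hn
  have h2 := (natCast_le_ordv_coe_iff v hr (n + 1)).not.mpr hn1
  push_cast at h2
  omega

lemma ordv_mapEquiv_coe (g : K ≃+* K) (r : 𝓞 K) :
    ordv (v.mapEquiv (RingOfIntegers.mapRingEquiv g)) (g r) = ordv v r := by
  set j := RingOfIntegers.mapRingEquiv g
  rcases eq_or_ne r 0 with rfl | hr
  · simp [ordv_zero]
  have hjr : j r ≠ 0 := (map_ne_zero_iff j j.injective).mpr hr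
  have key (n : ℕ) : (n : ℤ) ≤ ordv (v.mapEquiv j) (j r) ↔ (n : ℤ) ≤ ordv v r := by
    rw [natCast_le_ordv_coe_iff _ hjr, natCast_le_ordv_coe_iff _ hr, HeightOneSpectrum.mapEquiv,
      ← Ideal.map_pow, Ideal.apply_mem_of_equiv_iff]
  have h₁ := key (ordv v r).toNat
  have h₂ := key (ordv (v.mapEquiv j) (j r)).toNat
  have := ordv_coe_nonneg (v.mapEquiv j) (j r)
  have := ordv_coe_nonneg v r
  change ordv (v.mapEquiv j) (j r) = _
  omega

lemma ordv_mapEquiv (g : K ≃+* K) (x : K) :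
    ordv (v.mapEquiv (RingOfIntegers.mapRingEquiv g)) (g x) = ordv v x := by
  rcases eq_or_ne x 0 with rfl | hx
  · simp [ordv_zero]
  obtain ⟨a, b, hb, rfl⟩ := IsFractionRing.div_surjective (A := 𝓞 K) x
  have hb0 : (algebraMap (𝓞 K) K b) ≠ 0 := by simpa using nonZeroDivisors.ne_zero hb
  have ha0 : (algebraMap (𝓞 K) K a) ≠ 0 := by
    rintro h
    simp [h] at hx
  simp only [← RingOfIntegers.coe_eq_algebraMap] at ha0 hb0 ⊢
  rw [map_div₀, ordv_div _ ((map_ne_zero g).mpr ha0) ((map_ne_zero g).mpr hb0),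
    ordv_div _ ha0 hb0, ordv_mapEquiv_coe, ordv_mapEquiv_coe]

lemma ordv_mapEquiv_mul_div_apply (g : K ≃+* K) {x q : K} (hx : x ≠ 0) (hq : q ≠ 0) :
    ordv (v.mapEquiv (RingOfIntegers.mapRingEquiv g)) (x * q / g x) =
      ordv (v.mapEquiv (RingOfIntegers.mapRingEquiv g)) x +
        ordv (v.mapEquiv (RingOfIntegers.mapRingEquiv g)) q - ordv v x := by
  rw [ordv_div _ (mul_ne_zero hx hq) ((map_ne_zero g).mpr hx), ordv_mul _ hx hq, ordv_mapEquiv]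

end ordv

lemma IsDedekindDomain.HeightOneSpectrum.mem_mapEquiv_mapRingEquiv_iff {K : Type*} [Field K]
    (g : K ≃+* K) (w : HeightOneSpectrum (𝓞 K)) (x : 𝓞 K) :
    x ∈ (w.mapEquiv (RingOfIntegers.mapRingEquiv g)).asIdeal ↔
      ∃ y ∈ w.asIdeal, (x : K) = g (y : K) := by
  simp only [HeightOneSpectrum.mem_mapEquiv_iff, RingOfIntegers.ext_iff, eq_comm]
  rfl

section approximation

variable {K : Type*} [Field K] [NumberField K]

lemma exists_coe_ordv_eq_on (S : Finset (HeightOneSpectrum (𝓞 K)))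
    (n : HeightOneSpectrum (𝓞 K) → ℕ) : ∃ y : 𝓞 K, y ≠ 0 ∧ ∀ v ∈ S, ordv v y = n v := by
  classical
  rcases S.eq_empty_or_nonempty with rfl | ⟨v₀, hv₀⟩
  · exact ⟨1, one_ne_zero, by simp⟩
  choose a ha ha' using fun v : HeightOneSpectrum (𝓞 K) =>
    Ideal.exists_mem_pow_notMem_pow_succ v.asIdeal v.ne_bot v.isPrime.ne_top (n v)
  obtain ⟨y, hy⟩ := exists_forall_sub_mem_ideal (fun v => v.asIdeal) (fun v => n v + 1)
    (fun v _ => v.prime) (fun v _ w _ hvw h => hvw (HeightOneSpectrum.ext h)) (s := S) fun v => a v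
  have hexact (v) (hv : v ∈ S) : y ∈ v.asIdeal ^ n v ∧ y ∉ v.asIdeal ^ (n v + 1) := by
    refine ⟨?_, fun h => ha' v (by simpa using sub_mem h (hy v hv))⟩
    simpa using add_mem (Ideal.pow_le_pow_right (Nat.le_succ _) (hy v hv)) (ha v)
  refine ⟨y, ?_, fun v hv => ordv_coe_eq_of_mem_pow_of_notMem v (hexact v hv).1 (hexact v hv).2⟩
  rintro rfl
  exact (hexact v₀ hv₀).2 (zero_mem _)

lemma exists_ordv_eq_on {S : Set (HeightOneSpectrum (𝓞 K))} (hS : S.Finite)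
    (n : HeightOneSpectrum (𝓞 K) → ℤ) : ∃ x : K, x ≠ 0 ∧ ∀ v ∈ S, ordv v x = n v := by
  obtain ⟨a, ha0, ha⟩ := exists_coe_ordv_eq_on hS.toFinset fun v => (n v).toNat
  obtain ⟨b, hb0, hb⟩ := exists_coe_ordv_eq_on hS.toFinset fun v => (-n v).toNat
  have hb0' : (b : K) ≠ 0 := by exact_mod_cast hb0
  refine ⟨a / b, div_ne_zero (by exact_mod_cast ha0) hb0', fun v hv => ?_⟩
  rw [ordv_div v (by exact_mod_cast ha0) hb0', ha v (hS.mem_toFinset.mpr hv),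
    hb v (hS.mem_toFinset.mpr hv), Int.toNat_sub_toNat_neg]

end approximation

lemma exists_natCast_mem_heightOneSpectrum (K : Type*) [Field K] [NumberField K] {p : ℕ}
    (hp : p.Prime) : ∃ w : HeightOneSpectrum (𝓞 K), (p : 𝓞 K) ∈ w.asIdeal := by
  have : (Ideal.span {(p : ℤ)}).IsPrime :=
    (Ideal.span_singleton_prime (by exact_mod_cast hp.ne_zero)).mpr (Nat.prime_iff_prime_int.mp hp)
  obtain ⟨⟨Q, hQ, hQp⟩⟩ := (Ideal.span {(p : ℤ)}).nonempty_primesOver (S := 𝓞 K)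
  have hpQ : (p : 𝓞 K) ∈ Q := by
    simpa using (Ideal.mem_of_liesOver Q (Ideal.span {(p : ℤ)}) (p : ℤ)).mp
      (Ideal.mem_span_singleton_self _)
  refine ⟨⟨Q, hQ, fun h => ?_⟩, hpQ⟩
  rw [h, Ideal.mem_bot] at hpQ
  exact hp.ne_zero (by exact_mod_cast hpQ)

lemma mul_apply_eq_sq_of_eq_mul_div {F : Type*} [Field F] {ι : F ≃+* F}
    (hι : ∀ x, ι (ι x) = x) {α q π : F} (hα : α ≠ 0) (hq : ι q = q) (hπ : π = α * q / ι α) :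
    π * ι π = q ^ 2 := by
  have hια : ι α ≠ 0 := (map_ne_zero ι).mpr hα
  rw [hπ, map_div₀, map_mul, hι, hq]
  field_simp

lemma apply_apply_eq_self_of_forall_embedding {K : Type*} [Field K] [NumberField K]
    {ι : K ≃+* K} (hι : ∀ (σ : K →+* ℂ) (x : K), σ (ι x) = starRingEnd ℂ (σ x)) (x : K) :
    ι (ι x) = x := by
  obtain ⟨σ⟩ : Nonempty (K →+* ℂ) := inferInstance
  exact σ.injective (by rw [hι, hι, Complex.conj_conj])

theorem stmt10_general {K : Type*} [Field K] [NumberField K]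
    (ι : K ≃ₐ[ℚ] K)
    (hι : ∀ (σ : K →+* ℂ) (x : K), σ (ι x) = (starRingEnd ℂ) (σ x))
    (p : ℕ) (hp : p.Prime)
    (e f : ℕ)
    (he : ∀ w : HeightOneSpectrum (NumberField.RingOfIntegers K),
      (p : NumberField.RingOfIntegers K) ∈ w.asIdeal → ordv w (p : K) = e)
    (hf : ∀ w : HeightOneSpectrum (NumberField.RingOfIntegers K),
      (p : NumberField.RingOfIntegers K) ∈ w.asIdeal → Ideal.absNorm w.asIdeal = p ^ f)
    (m : ℤ) (φ : HeightOneSpectrum (NumberField.RingOfIntegers K) → ℤ)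
    (hφ : ∀ w w' : HeightOneSpectrum (NumberField.RingOfIntegers K),
      (p : NumberField.RingOfIntegers K) ∈ w.asIdeal →
      (p : NumberField.RingOfIntegers K) ∈ w'.asIdeal →
      (∀ x : NumberField.RingOfIntegers K,
        x ∈ w'.asIdeal ↔ ∃ y ∈ w.asIdeal, (x : K) = ι (y : K)) →
      φ w + φ w' = ((e : ℤ) * f) * m) :
    ∃ (N : ℕ) (π : K), 1 ≤ N ∧ π ≠ 0 ∧
      (∀ σ : K →+* ℂ, σ π * (starRingEnd ℂ) (σ π) = (p : ℂ) ^ ((N : ℤ) * m)) ∧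
      ∀ w : HeightOneSpectrum (NumberField.RingOfIntegers K),
        (p : NumberField.RingOfIntegers K) ∈ w.asIdeal →
        ((e : ℤ) * f) * ordv w π = (N : ℤ) * e * φ w := by
  obtain ⟨w₀, hw₀⟩ := exists_natCast_mem_heightOneSpectrum K hp
  have hf0 : f ≠ 0 := by
    rintro rfl
    exact w₀.isPrime.ne_top (Ideal.absNorm_eq_one_iff.mp (by simpa using hf w₀ hw₀))
  have hp0 : (p : K) ≠ 0 := by exact_mod_cast hp.ne_zero
  obtain ⟨α, hα0, hα⟩ := exists_ordv_eq_on
    (HeightOneSpectrum.finite_setOf_mem (r := (p : 𝓞 K)) (by exact_mod_cast hp.ne_zero)) φ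
  set q : K := (p : K) ^ ((f : ℤ) * m)
  have hq0 : q ≠ 0 := zpow_ne_zero _ hp0
  set π := α * q / ι α with hπ
  refine ⟨2 * f, π, by omega, div_ne_zero (mul_ne_zero hα0 hq0) ((map_ne_zero ι).mpr hα0),
    fun σ => ?_, ?_⟩
  · have hππ : π * ι π = q ^ 2 := mul_apply_eq_sq_of_eq_mul_div (ι := (ι : K ≃+* K))
      (apply_apply_eq_self_of_forall_embedding hι) hα0 (by simp [q]) hπ
    rw [← hι, ← map_mul, hππ, ← zpow_natCast, ← zpow_mul, map_zpow₀, map_natCast]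
    push_cast
    ring_nf
  · set j := RingOfIntegers.mapRingEquiv (ι : K ≃+* K)
    intro w hw
    obtain ⟨u, rfl⟩ := HeightOneSpectrum.mapEquiv_surjective j w
    have hu : (p : 𝓞 K) ∈ u.asIdeal := (HeightOneSpectrum.natCast_mem_mapEquiv_iff j u p).mp hw
    have hsum := hφ u (u.mapEquiv j) hu hw
      (HeightOneSpectrum.mem_mapEquiv_mapRingEquiv_iff (ι : K ≃+* K) u)
    have hπw : ordv (u.mapEquiv j) π = φ (u.mapEquiv j) + (f * m) * e - φ u := by
      refine (ordv_mapEquiv_mul_div_apply u (ι : K ≃+* K) hα0 hq0).trans ?_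
      rw [ordv_zpow, he _ hw, hα _ hw, hα _ hu]
    rw [hπw]
    push_cast
    linear_combination -((e : ℤ) * f) * hsum

/-- Let `K` be a number field, Galois over `ℚ`, admitting an
automorphism `ι` (the restriction of complex conjugation, necessarily central in
`Gal(K/ℚ)`) such that `σ ∘ ι = conj ∘ σ` for every embedding `σ : K → ℂ`.  Let `p` be a
prime such that `ι(w) ≠ w` for every prime `w` of `O_K` above `p`.  All such `w` have
the same ramification index `e` (i.e. `ord_w(p) = e`) and residue degree `f` (i.e. the
absolute norm of `w` is `p^f`); set `n₀ = e·f`.  Then for every `m ∈ ℤ` and every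
function `φ` on the primes above `p` with `φ(w) + φ(ι(w)) = n₀·m` for all `w | p`,
there exist `N ≥ 1` and `π ∈ K^×` with `σ(π)·conj(σ(π)) = p^{N·m}` for every embedding
`σ : K → ℂ` and `n₀·ord_w(π) = N·e·φ(w)` for every `w | p`; that is, `π` is a Weil
`p^N`-number of weight `m` with slope function `φ/n₀`. -/
theorem stmt10 {K : Type*} [Field K] [NumberField K] [IsGalois ℚ K]
    (ι : K ≃ₐ[ℚ] K)
    (hι : ∀ (σ : K →+* ℂ) (x : K), σ (ι x) = (starRingEnd ℂ) (σ x))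
    (p : ℕ) (hp : p.Prime)
    (hnofix : ∀ w : HeightOneSpectrum (NumberField.RingOfIntegers K),
      (p : NumberField.RingOfIntegers K) ∈ w.asIdeal →
      ¬(∀ x : NumberField.RingOfIntegers K,
          x ∈ w.asIdeal ↔ ∃ y ∈ w.asIdeal, (x : K) = ι (y : K)))
    (e f : ℕ)
    (he : ∀ w : HeightOneSpectrum (NumberField.RingOfIntegers K),
      (p : NumberField.RingOfIntegers K) ∈ w.asIdeal → ordv w (p : K) = e)
    (hf : ∀ w : HeightOneSpectrum (NumberField.RingOfIntegers K),
      (p : NumberField.RingOfIntegers K) ∈ w.asIdeal → Ideal.absNorm w.asIdeal = p ^ f)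
    (m : ℤ) (φ : HeightOneSpectrum (NumberField.RingOfIntegers K) → ℤ)
    (hφ : ∀ w w' : HeightOneSpectrum (NumberField.RingOfIntegers K),
      (p : NumberField.RingOfIntegers K) ∈ w.asIdeal →
      (p : NumberField.RingOfIntegers K) ∈ w'.asIdeal →
      (∀ x : NumberField.RingOfIntegers K,
        x ∈ w'.asIdeal ↔ ∃ y ∈ w.asIdeal, (x : K) = ι (y : K)) →
      φ w + φ w' = ((e : ℤ) * f) * m) :
    ∃ (N : ℕ) (π : K), 1 ≤ N ∧ π ≠ 0 ∧
      (∀ σ : K →+* ℂ, σ π * (starRingEnd ℂ) (σ π) = (p : ℂ) ^ ((N : ℤ) * m)) ∧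
      ∀ w : HeightOneSpectrum (NumberField.RingOfIntegers K),
        (p : NumberField.RingOfIntegers K) ∈ w.asIdeal →
        ((e : ℤ) * f) * ordv w π = (N : ℤ) * e * φ w :=
  stmt10_general ι hι p hp e f he hf m φ hφ
end
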